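/- arXiv:0912.0166 — 3 statements merged into one kernel-verified Lean document; each statement's English description precedes it below -/
import Mathlib

section
/- Let R be an associative unital ℂ-algebra which is a domain, and let V ⊆ W ⊆ R be finite-dimensional ℂ-subspaces with dim_ℂ W < 2·dim_ℂ V. Suppose a, s ∈ R are such that a·V ⊆ W and s·V ⊆ W, with s ≠ 0. Then there exist t ∈ V with t ≠ 0 and b ∈ V such that a·t = s·b. -/
theorem tamari_kernel_step {R : Type*} [Ring R] [Algebra ℂ R] [IsDomain R]
    (V W : Submodule ℂ R) (hVW : V ≤ W) [FiniteDimensional ℂ W]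
    (hdim : Module.finrank ℂ W < 2 * Module.finrank ℂ V)
    (a s : R) (ha : ∀ x ∈ V, a * x ∈ W) (hs : ∀ x ∈ V, s * x ∈ W)
    (hs0 : s ≠ 0) :
    ∃ t ∈ V, t ≠ 0 ∧ ∃ b ∈ V, a * t = s * b := by
  have hV : FiniteDimensional ℂ V := Submodule.finiteDimensional_of_le hVW
  let α : (V × V) →ₗ[ℂ] W :=
    { toFun := fun p => ⟨a * (p.1 : R) - s * (p.2 : R),
        W.sub_mem (ha _ p.1.2) (hs _ p.2.2)⟩
      map_add' := by
        intro p q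
        ext
        simp only [Prod.fst_add, Prod.snd_add, Submodule.coe_add]
        rw [mul_add, mul_add]
        abel
      map_smul' := by
        intro c p
        ext
        simp only [Prod.smul_fst, Prod.smul_snd, Submodule.coe_smul, RingHom.id_apply,
          smul_sub, mul_smul_comm] }
  have hker : ∃ p : V × V, p ≠ 0 ∧ α p = 0 := by
    by_contra h
    push_neg at h
    have hinj : Function.Injective α := by
      rw [← LinearMap.ker_eq_bot, eq_bot_iff]
      intro p hp
      rcases eq_or_ne p 0 with rfl | hne
      · simp
      · exact absurd hp (h p hne)
    have hle := LinearMap.finrank_le_finrank_of_injective hinj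
    rw [Module.finrank_prod] at hle
    omega
  obtain ⟨⟨t, b⟩, hp0, hp⟩ := hker
  have heq : a * (t : R) - s * (b : R) = 0 := congrArg Subtype.val hp
  have heq' : a * (t : R) = s * (b : R) := sub_eq_zero.mp heq
  refine ⟨t, t.2, ?_, b, b.2, heq'⟩
  intro ht0
  apply hp0
  have ht : (t : R) = 0 := ht0
  have hb : (b : R) = 0 := by
    have : s * (b : R) = 0 := by rw [← heq', ht, mul_zero]
    rcases mul_eq_zero.mp this with h | h
    · exact absurd h hs0
    · exact h
  ext <;> simp [ht, hb]
end

section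
/- Let Γ be an amenable group (satisfying the Følner condition) and suppose the group algebra ℂ[Γ] is a domain. Then ℂ[Γ] satisfies the right Ore condition with respect to the set Z of all nonzero elements: for every a ∈ ℂ[Γ] and every s ∈ ℂ[Γ], s ≠ 0, there exist b ∈ ℂ[Γ] and t ∈ ℂ[Γ], t ≠ 0, with a·t = s·b. -/
/-- Følner's condition for a discrete group `Γ`: for every finite `S ⊆ Γ` and `ε > 0`
there is a finite nonempty `F ⊆ Γ` with `|{g ∈ F : Sg ⊄ F}| < ε |F|`. -/
def GroupFolner (Γ : Type*) [Group Γ] [DecidableEq Γ] : Prop :=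
  ∀ S : Finset Γ, ∀ ε : ℝ, 0 < ε → ∃ F : Finset Γ, F.Nonempty ∧
    ((F.filter (fun g => ¬ S.image (· * g) ⊆ F)).card : ℝ) < ε * (F.card : ℝ)

/-!
Tamari's dimension count. Take a Følner set `F` for `S = supp a ∪ supp s` with `ε = 1/2`, so
that its `S`-interior `I = {g ∈ F | S g ⊆ F}` has more than half the elements of `F`. Left
multiplication by `a` and by `s` maps the elements supported on `I` into those supported on `F`,
so `(t, b) ↦ a t - s b` maps a space of dimension `2 |I|` into one of dimension `|F| < 2 |I|` and
has a nonzero kernel element. As `ℂ[Γ]` has no zero divisors and `s ≠ 0`, its `t` is nonzero.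
-/

open Module

namespace LinearMap

variable {K V W : Type*} [Field K] [AddCommGroup V] [Module K V] [AddCommGroup W] [Module K W]

theorem exists_apply_eq_apply_of_finrank_lt (f g : V →ₗ[K] W) {U : Submodule K V}
    {T : Submodule K W} [FiniteDimensional K T] (hf : ∀ u ∈ U, f u ∈ T)
    (hg : ∀ u ∈ U, g u ∈ T)
    (hdim : finrank K T < 2 * finrank K U) :
    ∃ u ∈ U, ∃ v ∈ U, (u, v) ≠ 0 ∧ f u = g v := by
  have : FiniteDimensional K U := finite_of_finrank_pos (by omega)
  let φ : U × U →ₗ[K] T :=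
    codRestrict T (f ∘ₗ U.subtype ∘ₗ fst K U U - g ∘ₗ U.subtype ∘ₗ snd K U U)
      fun p => T.sub_mem (hf _ p.1.2) (hg _ p.2.2)
  obtain ⟨⟨u, v⟩, hφp, hp⟩ : ∃ p, φ p = 0 ∧ p ≠ 0 := by
    by_contra! h
    have := finrank_le_finrank_of_injective ((injective_iff_map_eq_zero φ).mpr h)
    rw [finrank_prod] at this
    omega
  refine ⟨u, u.2, v, v.2, fun h => hp ?_, sub_eq_zero.mp (congrArg Subtype.val hφp)⟩
  simpa only [Prod.ext_iff, Prod.fst_zero, Prod.snd_zero, ZeroMemClass.coe_eq_zero] using h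

end LinearMap

theorem exists_mul_eq_mul_of_finrank_lt {K R : Type*} [Field K] [Ring R] [Algebra K R]
    [NoZeroDivisors R] {a s : R} (hs : s ≠ 0) {U T : Submodule K R} [FiniteDimensional K T]
    (haT : ∀ u ∈ U, a * u ∈ T) (hsT : ∀ u ∈ U, s * u ∈ T)
    (hdim : finrank K T < 2 * finrank K U) :
    ∃ b t : R, t ≠ 0 ∧ a * t = s * b := by
  obtain ⟨t, -, b, -, hne, hab⟩ := (LinearMap.mulLeft K a).exists_apply_eq_apply_of_finrank_lt
    (LinearMap.mulLeft K s) haT hsT hdim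
  refine ⟨b, t, fun ht => hne ?_, hab⟩
  have hsb : s * b = 0 := by simpa only [ht, LinearMap.mulLeft_apply, mul_zero] using hab.symm
  have hb : b = 0 := (mul_eq_zero.mp hsb).resolve_left hs
  simp [ht, hb]

namespace Finset

open Pointwise

variable {G : Type*} [Mul G] [DecidableEq G]

def mulInterior (S F : Finset G) : Finset G :=
  F.filter fun g => S.image (· * g) ⊆ F

theorem mul_mulInterior_subset (S F : Finset G) : S * S.mulInterior F ⊆ F := by
  intro x hx
  obtain ⟨y, hy, g, hg, rfl⟩ := mem_mul.mp hx
  exact (mem_filter.mp hg).2 (mem_image_of_mem _ hy)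

end Finset

theorem GroupFolner.exists_card_lt_two_mul_card_mulInterior {Γ : Type*} [Group Γ]
    [DecidableEq Γ] (h : GroupFolner Γ) (S : Finset Γ) :
    ∃ F : Finset Γ, F.card < 2 * (S.mulInterior F).card := by
  obtain ⟨F, -, hF⟩ := h S (1 / 2) (by norm_num)
  refine ⟨F, ?_⟩
  have hsplit := F.card_filter_add_card_filter_not fun g => S.image (· * g) ⊆ F
  have : (F.card : ℝ) < 2 * (S.mulInterior F).card := by
    rw [Finset.mulInterior]
    rw [← hsplit] at hF ⊢
    push_cast at hF ⊢
    linarith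
  exact_mod_cast this

namespace MonoidAlgebra

variable {K G : Type*} [Field K]

instance (F : Finset G) : FiniteDimensional K (supported K K (F : Set G)) :=
  (supportedEquivFinsupp (F : Set G)).symm.finiteDimensional

theorem finrank_supported (F : Finset G) : finrank K (supported K K (F : Set G)) = F.card := by
  simp [(supportedEquivFinsupp (F : Set G)).finrank_eq]

theorem mul_mem_supported_mulInterior [Mul G] [DecidableEq G] {x t : MonoidAlgebra K G}
    {S F : Finset G} (hx : x.coeff.support ⊆ S)
    (ht : t ∈ supported K K (S.mulInterior F : Set G)) :
    x * t ∈ supported K K (F : Set G) := by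
  rw [mem_supported, Finset.coe_subset] at ht ⊢
  exact (support_coeff_mul_subset x t).trans
    ((Finset.mul_subset_mul hx ht).trans (S.mul_mulInterior_subset F))

end MonoidAlgebra

theorem groupAlgebra_ore_condition {Γ : Type*} [Group Γ] [DecidableEq Γ]
    (hFol : GroupFolner Γ) [IsDomain (MonoidAlgebra ℂ Γ)]
    (a s : MonoidAlgebra ℂ Γ) (hs : s ≠ 0) :
    ∃ b t : MonoidAlgebra ℂ Γ, t ≠ 0 ∧ a * t = s * b := by
  set S := a.coeff.support ∪ s.coeff.support
  obtain ⟨F, hF⟩ := hFol.exists_card_lt_two_mul_card_mulInterior S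
  refine exists_mul_eq_mul_of_finrank_lt (K := ℂ)
    (U := MonoidAlgebra.supported ℂ ℂ (S.mulInterior F : Set Γ))
    (T := MonoidAlgebra.supported ℂ ℂ (F : Set Γ)) hs
    (fun _ => MonoidAlgebra.mul_mem_supported_mulInterior Finset.subset_union_left)
    (fun _ => MonoidAlgebra.mul_mem_supported_mulInterior Finset.subset_union_right) ?_
  rwa [MonoidAlgebra.finrank_supported, MonoidAlgebra.finrank_supported]
end

section
/- Let Γ be a group satisfying the Følner condition and a ∈ ℂ[Γ] an element which is not a right zero-divisor in ℂ[Γ] (i.e., ba = 0 implies b = 0). Then the right-multiplication operator ρ(a) on ℓ²(Γ) has trivial kernel. -/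
open scoped lp Pointwise InnerProductSpace

namespace Submodule

variable {𝕜 E ι : Type*} [RCLike 𝕜] [NormedAddCommGroup E] [InnerProductSpace 𝕜 E]

lemma inner_starProjection_right_eq_norm_sq (K : Submodule 𝕜 E) [K.HasOrthogonalProjection]
    (v : E) : ⟪v, K.starProjection v⟫_𝕜 = (‖K.starProjection v‖ ^ 2 : ℝ) := by
  have h := K.starProjection_inner_eq_zero v _ (K.starProjection_apply_mem v)
  rw [inner_sub_left, sub_eq_zero, inner_self_eq_norm_sq_to_K] at h
  exact_mod_cast h

lemma sum_norm_sq_starProjection_eq_finrank [Fintype ι] [FiniteDimensional 𝕜 E]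
    (K : Submodule 𝕜 E) (b : OrthonormalBasis ι 𝕜 E) :
    ∑ i, ‖K.starProjection (b i)‖ ^ 2 = Module.finrank 𝕜 K := by
  have hproj : LinearMap.IsProj K (K.starProjection : E →ₗ[𝕜] E) :=
    ⟨K.starProjection_apply_mem, fun _ hx => K.starProjection_eq_self_iff.2 hx⟩
  have htrace := (LinearMap.trace_eq_sum_inner _ b).symm.trans hproj.trace
  apply RCLike.ofReal_injective (K := 𝕜)
  rw [RCLike.ofReal_natCast, ← htrace]
  push_cast
  exact Finset.sum_congr rfl fun i _ =>
    by exact_mod_cast (K.inner_starProjection_right_eq_norm_sq (b i)).symm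

lemma le_norm_sq_starProjection (K : Submodule 𝕜 E) [K.HasOrthogonalProjection] {x u : E}
    (hu : u ∈ K) {t : ℝ} (hxu : ⟪x, u⟫_𝕜 = t) (hut : ‖u‖ ^ 2 ≤ t) :
    t ≤ ‖K.starProjection x‖ ^ 2 := by
  rcases le_or_gt t 0 with ht | ht
  · exact ht.trans (sq_nonneg _)
  have hinner : ⟪K.starProjection x, u⟫_𝕜 = t := by
    rw [K.inner_starProjection_left_eq_right, K.starProjection_eq_self_iff.2 hu, hxu]
  have hcs : t ≤ ‖K.starProjection x‖ * ‖u‖ := by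
    simpa [hinner, abs_of_pos ht] using norm_inner_le_norm (𝕜 := 𝕜) (K.starProjection x) u
  nlinarith [norm_nonneg u, norm_nonneg (K.starProjection x)]

lemma mul_card_le_finrank [Fintype ι] [FiniteDimensional 𝕜 E] (K : Submodule 𝕜 E)
    (b : OrthonormalBasis ι 𝕜 E) {t : ℝ} (h : ∀ i, ∃ u ∈ K, ⟪b i, u⟫_𝕜 = t ∧ ‖u‖ ^ 2 ≤ t) :
    t * Fintype.card ι ≤ Module.finrank 𝕜 K := by
  rw [← K.sum_norm_sq_starProjection_eq_finrank b, mul_comm, ← nsmul_eq_mul, ← Finset.card_univ,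
    ← Finset.sum_const]
  refine Finset.sum_le_sum fun i _ => ?_
  obtain ⟨u, hu, hbu, hut⟩ := h i
  exact K.le_norm_sq_starProjection hu hbu hut

end Submodule

section Boundary

variable {Γ : Type*} [Group Γ] [DecidableEq Γ]

def rightBoundary (S E : Finset Γ) : Finset Γ := E.filter fun y => ¬ ∀ s ∈ S, y * s ∈ E

lemma rightBoundary_inv (S F : Finset Γ) :
    rightBoundary S F⁻¹ = (F.filter fun g => ¬ S⁻¹.image (· * g) ⊆ F)⁻¹ := by
  ext y
  simp only [rightBoundary, Finset.mem_filter, Finset.mem_inv', Finset.image_subset_iff,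
    mul_inv_rev]
  exact and_congr_right fun _ => not_congr
    ⟨fun h x hx => by simpa using h _ hx, fun h s hs => h s⁻¹ (by simpa using hs)⟩

lemma GroupFolner.exists_card_rightBoundary_lt (hFol : GroupFolner Γ) (S : Finset Γ) {ε : ℝ}
    (hε : 0 < ε) : ∃ E : Finset Γ, E.Nonempty ∧ ((rightBoundary S E).card : ℝ) < ε * E.card := by
  obtain ⟨F, hF, hlt⟩ := hFol S⁻¹ ε hε
  exact ⟨F⁻¹, hF.inv, by rwa [rightBoundary_inv, Finset.card_inv, Finset.card_inv]⟩

lemma forall_mul_inv_mem_or_forall_notMem {K E : Finset Γ} {x : Γ}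
    (hx : x ∉ rightBoundary (K * K⁻¹) E * K) :
    (∀ h ∈ K, x * h⁻¹ ∈ E) ∨ ∀ h ∈ K, x * h⁻¹ ∉ E := by
  by_contra! ⟨⟨h, hK, hout⟩, ⟨h', hK', hin⟩⟩
  have hy : x * h'⁻¹ ∈ rightBoundary (K * K⁻¹) E := Finset.mem_filter.2 ⟨hin, fun hall => hout <| by
    simpa [mul_assoc] using hall (h' * h⁻¹) (Finset.mul_mem_mul hK' (Finset.inv_mem_inv hK))⟩
  exact hx (by simpa using Finset.mul_mem_mul hy hK')

end Boundary

namespace MonoidAlgebra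

instance finiteDimensional_supported {k G : Type*} [Field k] (B : Finset G) :
    FiniteDimensional k (supported k k (B : Set G)) :=
  (supportedEquivFinsupp (B : Set G)).symm.finiteDimensional

lemma finrank_le_card_of_mul_mem_supported {k G : Type*} [Field k] [Monoid G]
    {a : MonoidAlgebra k G} (ha : ∀ b : MonoidAlgebra k G, b * a = 0 → b = 0)
    (V : Submodule k (MonoidAlgebra k G)) (B : Finset G)
    (hV : ∀ b ∈ V, b * a ∈ supported k k (B : Set G)) :
    Module.finrank k V ≤ B.card := by
  let mulA := ((LinearMap.mulRight k a).domRestrict V).codRestrict _ fun b => hV b b.2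
  have hinj : Function.Injective mulA := (injective_iff_map_eq_zero mulA).2 fun b hb =>
    Subtype.ext (ha b (congrArg Subtype.val hb))
  calc Module.finrank k V ≤ Module.finrank k (supported k k (B : Set G)) :=
        LinearMap.finrank_le_finrank_of_injective hinj
    _ = B.card := by rw [(supportedEquivFinsupp (B : Set G)).finrank_eq]; simp

def coeffOn {α : Type*} (E : Finset α) : MonoidAlgebra ℂ α →ₗ[ℂ] EuclideanSpace ℂ E where
  toFun b := WithLp.toLp 2 fun c => b.coeff c
  map_add' _ _ := rfl
  map_smul' _ _ := rfl

@[simp] lemma coeffOn_apply {α : Type*} (E : Finset α) (b : MonoidAlgebra ℂ α) (c : E) :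
    coeffOn E b c = b.coeff c := rfl

end MonoidAlgebra

namespace lp

variable {α β : Type*}

lemma memℓp_two_comp_equiv (e : α ≃ β) (f : ℓ²(β, ℂ)) : Memℓp (fun x => f (e x)) 2 :=
  memℓp_gen <| (e.summable_iff (f := fun y => ‖f y‖ ^ (2 : ENNReal).toReal)).2 <|
    (memℓp_gen_iff (by norm_num)).1 (lp.memℓp f)

noncomputable def compEquiv (e : α ≃ β) : ℓ²(β, ℂ) ≃ₗᵢ[ℂ] ℓ²(α, ℂ) where
  toFun f := ⟨fun x => f (e x), memℓp_two_comp_equiv e f⟩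
  invFun f := ⟨fun y => f (e.symm y), memℓp_two_comp_equiv e.symm f⟩
  map_add' _ _ := rfl
  map_smul' _ _ := rfl
  left_inv f := by ext y; simp
  right_inv f := by ext x; simp
  norm_map' f := by
    rw [lp.norm_eq_tsum_rpow (by norm_num), lp.norm_eq_tsum_rpow (by norm_num)]
    exact congrArg (· ^ _) (e.tsum_eq (fun y => ‖f y‖ ^ (2 : ENNReal).toReal))

@[simp] lemma compEquiv_apply (e : α ≃ β) (f : ℓ²(β, ℂ)) (x : α) :
    compEquiv e f x = f (e x) := rfl

section Group

variable {Γ : Type*} [Group Γ]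

noncomputable abbrev leftTranslate (g : Γ) : ℓ²(Γ, ℂ) ≃ₗᵢ[ℂ] ℓ²(Γ, ℂ) :=
  compEquiv (Equiv.mulLeft g⁻¹)

lemma leftTranslate_apply (g : Γ) (f : ℓ²(Γ, ℂ)) (x : Γ) :
    leftTranslate g f x = f (g⁻¹ * x) := rfl

lemma leftTranslate_single [DecidableEq Γ] (g x : Γ) (c : ℂ) :
    leftTranslate g (lp.single 2 x c) = lp.single 2 (g * x) c := by
  ext y
  simp only [leftTranslate_apply, lp.single_apply, Pi.single_apply, inv_mul_eq_iff_eq_mul]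

lemma leftTranslate_leftTranslate_inv (g : Γ) (f : ℓ²(Γ, ℂ)) :
    leftTranslate g (leftTranslate g⁻¹ f) = f := by
  ext x
  simp

noncomputable def rightConvolution (a : MonoidAlgebra ℂ Γ) : ℓ²(Γ, ℂ) →L[ℂ] ℓ²(Γ, ℂ) :=
  ∑ h ∈ a.coeff.support, a.coeff h • (compEquiv (Equiv.mulRight h⁻¹) : ℓ²(Γ, ℂ) →L[ℂ] ℓ²(Γ, ℂ))

lemma rightConvolution_apply (a : MonoidAlgebra ℂ Γ) (f : ℓ²(Γ, ℂ)) (x : Γ) :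
    rightConvolution a f x = ∑ h ∈ a.coeff.support, a.coeff h * f (x * h⁻¹) := by
  simp only [rightConvolution, sum_apply, smul_apply]
  rw [lp.coeFn_sum, Finset.sum_apply]
  rfl

lemma rightConvolution_leftTranslate (a : MonoidAlgebra ℂ Γ) (g : Γ) (f : ℓ²(Γ, ℂ)) :
    rightConvolution a (leftTranslate g f) = leftTranslate g (rightConvolution a f) := by
  ext x
  simp only [rightConvolution_apply, leftTranslate_apply, mul_assoc]

end Group

section Truncation

variable [DecidableEq α]

noncomputable def truncate (E : Finset α) : ℓ²(α, ℂ) →ₗ[ℂ] MonoidAlgebra ℂ α where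
  toFun f := .ofCoeff <| Finsupp.onFinset E (fun x => if x ∈ E then f x else 0) fun x hx => by
    by_contra h
    exact hx (if_neg h)
  map_add' f g := by
    ext x
    simp only [MonoidAlgebra.coeff_add, Finsupp.add_apply, Finsupp.onFinset_apply, lp.coeFn_add,
      Pi.add_apply]
    split_ifs <;> simp
  map_smul' c f := by
    ext x
    simp only [MonoidAlgebra.coeff_smul, Finsupp.smul_apply, Finsupp.onFinset_apply,
      lp.coeFn_smul, Pi.smul_apply, RingHom.id_apply]
    split_ifs <;> simp

lemma truncate_coeff (E : Finset α) (f : ℓ²(α, ℂ)) (x : α) :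
    (truncate E f).coeff x = if x ∈ E then f x else 0 := rfl

lemma truncate_mem_supported (E : Finset α) (f : ℓ²(α, ℂ)) :
    truncate E f ∈ MonoidAlgebra.supported ℂ ℂ (E : Set α) :=
  MonoidAlgebra.mem_supported'.2 fun _ hx => if_neg hx

lemma truncate_mul_mem_supported [Group α] {a : MonoidAlgebra ℂ α} {f : ℓ²(α, ℂ)}
    (hf : rightConvolution a f = 0) (E : Finset α) :
    truncate E f * a ∈ MonoidAlgebra.supported ℂ ℂ
      ↑(rightBoundary (a.coeff.support * a.coeff.support⁻¹) E * a.coeff.support) := by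
  rw [MonoidAlgebra.mem_supported']
  intro x hx
  rw [MonoidAlgebra.coeff_mul_apply_right, Finsupp.sum]
  rcases forall_mul_inv_mem_or_forall_notMem hx with hin | hout
  · have hx0 : rightConvolution a f x = 0 := by rw [hf]; rfl
    rw [rightConvolution_apply] at hx0
    rw [← hx0]
    exact Finset.sum_congr rfl fun h hh => by rw [truncate_coeff, if_pos (hin h hh), mul_comm]
  · exact Finset.sum_eq_zero fun h hh => by rw [truncate_coeff, if_neg (hout h hh), zero_mul]

lemma finrank_map_truncate_ker_le [Group α] {a : MonoidAlgebra ℂ α}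
    (ha : ∀ b : MonoidAlgebra ℂ α, b * a = 0 → b = 0) (E : Finset α) :
    Module.finrank ℂ ((rightConvolution a).ker.map (truncate E)) ≤
      (rightBoundary (a.coeff.support * a.coeff.support⁻¹) E * a.coeff.support).card :=
  MonoidAlgebra.finrank_le_card_of_mul_mem_supported ha _ _ <| by
    rintro _ ⟨f, hf, rfl⟩
    exact truncate_mul_mem_supported hf E

noncomputable def restrict (E : Finset α) : ℓ²(α, ℂ) →ₗ[ℂ] EuclideanSpace ℂ E :=
  MonoidAlgebra.coeffOn E ∘ₗ truncate E

@[simp] lemma restrict_apply (E : Finset α) (f : ℓ²(α, ℂ)) (c : E) : restrict E f c = f c := by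
  simp [restrict, truncate_coeff]

lemma norm_sq_restrict_le (E : Finset α) (f : ℓ²(α, ℂ)) : ‖restrict E f‖ ^ 2 ≤ ‖f‖ ^ 2 := by
  have h := lp.sum_rpow_le_norm_rpow (p := 2) (by norm_num) f E
  simp only [ENNReal.toReal_ofNat, Real.rpow_two] at h
  rw [EuclideanSpace.norm_sq_eq]
  simpa [← E.sum_coe_sort] using h

lemma finrank_map_restrict_le (E : Finset α) (Z : Submodule ℂ ℓ²(α, ℂ)) :
    Module.finrank ℂ (Z.map (restrict E)) ≤ Module.finrank ℂ (Z.map (truncate E)) := by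
  have : FiniteDimensional ℂ (Z.map (truncate E)) :=
    Submodule.finiteDimensional_of_le (S₂ := MonoidAlgebra.supported ℂ ℂ (E : Set α)) <| by
      rintro _ ⟨f, -, rfl⟩
      exact truncate_mem_supported E f
  rw [restrict, Submodule.map_comp]
  exact Submodule.finrank_map_le _ _

end Truncation

section InvariantSubspace

variable {Γ : Type*} [Group Γ]

def LeftInvariant (Z : Submodule ℂ ℓ²(Γ, ℂ)) : Prop :=
  ∀ g, ∀ f ∈ Z, leftTranslate g f ∈ Z

lemma leftInvariant_ker_rightConvolution (a : MonoidAlgebra ℂ Γ) :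
    LeftInvariant (rightConvolution a).ker := fun g f hf => by
  rw [LinearMap.mem_ker, ContinuousLinearMap.coe_coe] at hf ⊢
  rw [rightConvolution_leftTranslate, hf, map_zero]

variable {Z : Submodule ℂ ℓ²(Γ, ℂ)} [Z.HasOrthogonalProjection]

lemma starProjection_leftTranslate (hZ : LeftInvariant Z) (g : Γ) (f : ℓ²(Γ, ℂ)) :
    Z.starProjection (leftTranslate g f) = leftTranslate g (Z.starProjection f) := by
  refine Z.eq_starProjection_of_mem_of_inner_eq_zero (hZ g _ (Z.starProjection_apply_mem f))
    fun w hw => ?_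
  rw [← leftTranslate_leftTranslate_inv g w, ← map_sub, LinearIsometryEquiv.inner_map_map]
  exact Z.starProjection_inner_eq_zero f _ (hZ g⁻¹ w hw)

variable [DecidableEq Γ]

lemma starProjection_single (hZ : LeftInvariant Z) (x : Γ) :
    Z.starProjection (lp.single 2 x 1) = leftTranslate x (Z.starProjection (lp.single 2 1 1)) := by
  rw [← starProjection_leftTranslate hZ, leftTranslate_single, mul_one]

lemma starProjection_single_apply_self (hZ : LeftInvariant Z) (x : Γ) :
    Z.starProjection (lp.single 2 x 1) x = (‖Z.starProjection (lp.single 2 1 1)‖ ^ 2 : ℝ) := by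
  have h := Z.inner_starProjection_right_eq_norm_sq (lp.single 2 1 1)
  rw [lp.inner_single_left] at h
  rw [starProjection_single hZ, leftTranslate_apply, inv_mul_cancel]
  simpa using h

lemma norm_starProjection_single (hZ : LeftInvariant Z) (x : Γ) :
    ‖Z.starProjection (lp.single 2 x 1)‖ = ‖Z.starProjection (lp.single 2 1 1)‖ := by
  rw [starProjection_single hZ, LinearIsometryEquiv.norm_map]

lemma starProjection_single_one_ne_zero (hZ : LeftInvariant Z) {f : ℓ²(Γ, ℂ)} (hf : f ∈ Z)
    (hf0 : f ≠ 0) : Z.starProjection (lp.single 2 1 1) ≠ 0 := by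
  intro h0
  refine hf0 (lp.ext (funext fun x => ?_))
  have hx : Z.starProjection (lp.single 2 x 1) = 0 := by
    rw [← norm_eq_zero, norm_starProjection_single hZ, h0, norm_zero]
  calc f x = ⟪lp.single 2 x 1, f⟫_ℂ := by simp [lp.inner_single_left]
    _ = ⟪lp.single 2 x 1, Z.starProjection f⟫_ℂ := by rw [Z.starProjection_eq_self_iff.2 hf]
    _ = 0 := by rw [← Z.inner_starProjection_left_eq_right, hx, inner_zero_left]

lemma mul_card_le_finrank_map_restrict (hZ : LeftInvariant Z) (E : Finset Γ) :
    ‖Z.starProjection (lp.single 2 1 1)‖ ^ 2 * E.card ≤ Module.finrank ℂ (Z.map (restrict E)) := by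
  rw [← Fintype.card_coe]
  refine Submodule.mul_card_le_finrank _ (EuclideanSpace.basisFun E ℂ) fun c => ?_
  refine ⟨_, Submodule.mem_map_of_mem (Z.starProjection_apply_mem (lp.single 2 c 1)), ?_, ?_⟩
  · simp [EuclideanSpace.inner_single_left, starProjection_single_apply_self hZ]
  · simpa [norm_starProjection_single hZ] using
      norm_sq_restrict_le E (Z.starProjection (lp.single 2 c 1))

end InvariantSubspace

end lp

theorem right_convolution_injective_of_not_right_zero_divisor_general
    {Γ : Type*} [Group Γ] [DecidableEq Γ]
    (hFol : GroupFolner Γ)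
    (a : MonoidAlgebra ℂ Γ)
    (ha : ∀ b : MonoidAlgebra ℂ Γ, b * a = 0 → b = 0)
    (ξ : lp (fun _ : Γ => ℂ) 2)
    (hξ : ∀ x : Γ, ∑ h ∈ a.coeff.support, a.coeff h * (ξ : ∀ _ : Γ, ℂ) (x * h⁻¹) = 0) :
    ξ = 0 := by
  by_contra hξ0
  set Z := (lp.rightConvolution a).ker
  have hZ := lp.leftInvariant_ker_rightConvolution a
  have hξZ : ξ ∈ Z := LinearMap.mem_ker.2 <| lp.ext <| funext fun x =>
    (lp.rightConvolution_apply a ξ x).trans (hξ x)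
  set K := a.coeff.support
  set δ := ‖Z.starProjection (lp.single 2 1 1)‖ ^ 2
  have hδ : 0 < δ := pow_pos (norm_pos_iff.2 (lp.starProjection_single_one_ne_zero hZ hξZ hξ0)) 2
  have hk : (0 : ℝ) < K.card + 1 := by positivity
  obtain ⟨E, hE, hbd⟩ := hFol.exists_card_rightBoundary_lt (K * K⁻¹) (div_pos hδ hk)
  have hE0 : (0 : ℝ) < E.card := by exact_mod_cast hE.card_pos
  have hdim : δ * E.card ≤ (rightBoundary (K * K⁻¹) E).card * K.card := by
    have hfin := (lp.finrank_map_restrict_le E Z).trans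
      ((lp.finrank_map_truncate_ker_le ha E).trans Finset.card_mul_le)
    exact (lp.mul_card_le_finrank_map_restrict hZ E).trans (by exact_mod_cast hfin)
  have hsmall : (rightBoundary (K * K⁻¹) E).card * (K.card : ℝ) < δ * E.card :=
    calc _ ≤ δ / (K.card + 1) * E.card * K.card := by gcongr
      _ < δ * E.card := by
        rw [div_mul_eq_mul_div, div_mul_eq_mul_div, div_lt_iff₀ hk]
        nlinarith [mul_pos hδ hE0]
  exact hdim.not_gt hsmall

/-- Elek's theorem (group case of Theorem zd-thm): if `Γ` is amenable and
`a ∈ ℂ[Γ]` is not a right zero-divisor, then the right convolution operator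
`ρ(a) : ℓ²(Γ) → ℓ²(Γ)`, `(ρ(a)ξ)(x) = ∑_h a(h) ξ(x h⁻¹)`, has trivial kernel. -/
theorem right_convolution_injective_of_not_right_zero_divisor
    {Γ : Type*} [Group Γ] [Countable Γ] [DecidableEq Γ]
    (hFol : GroupFolner Γ)
    (a : MonoidAlgebra ℂ Γ)
    (ha : ∀ b : MonoidAlgebra ℂ Γ, b * a = 0 → b = 0)
    (ξ : lp (fun _ : Γ => ℂ) 2)
    (hξ : ∀ x : Γ, ∑ h ∈ a.coeff.support, a.coeff h * (ξ : ∀ _ : Γ, ℂ) (x * h⁻¹) = 0) :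
    ξ = 0 :=
  right_convolution_injective_of_not_right_zero_divisor_general hFol a ha ξ hξ
end
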